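/- For 0 < α < 2/3, let D'₈(α) be the octagon with vertices v₁ = (3/2 - 5α/4, -2), v₂ = (-1/2 - 5α/4, -2), v₃ = (α/4 - 3/2, 0), v₄ = (α/4 - 3/2, 1), v₅ = -v₁, ..., v₈ = -v₄, and let Λ(α) be the lattice generated by (2,0) and (1 + α/2, 1). Then D'₈(α) + Λ(α) is a five-fold tiling of ℝ². -/

import Mathlib

/-- `K + X` is a `k`-fold tiling of the plane. -/
def IsKFoldTiling (K X : Set (ℝ × ℝ)) (k : ℕ) : Prop :=
  (∀ y : ℝ × ℝ, ∃ S : Finset (ℝ × ℝ), ↑S ⊆ {x ∈ X | y - x ∈ K} ∧ k ≤ S.card) ∧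
  (∀ y : ℝ × ℝ, ∀ S : Finset (ℝ × ℝ), ↑S ⊆ {x ∈ X | y - x ∈ interior K} → S.card ≤ k)

/-- The octagon `D'₈(α)` with vertices `(3/2 - 5α/4, -2), (-1/2 - 5α/4, -2),
(α/4 - 3/2, 0), (α/4 - 3/2, 1)` and their negatives. -/
noncomputable def D₈'α (α : ℝ) : Set (ℝ × ℝ) :=
  convexHull ℝ {((3:ℝ)/2 - 5*α/4, -(2:ℝ)), (-(1:ℝ)/2 - 5*α/4, -(2:ℝ)),
    (α/4 - (3:ℝ)/2, (0:ℝ)), (α/4 - (3:ℝ)/2, (1:ℝ)),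
    (5*α/4 - (3:ℝ)/2, (2:ℝ)), ((1:ℝ)/2 + 5*α/4, (2:ℝ)),
    ((3:ℝ)/2 - α/4, (0:ℝ)), ((3:ℝ)/2 - α/4, -(1:ℝ))}

/-- The lattice `Λ(α)` generated by `(2,0)` and `(1 + α/2, 1)`. -/
def Λα (α : ℝ) : Set (ℝ × ℝ) :=
  {p | ∃ m n : ℤ, p = (2*m + n*(1 + α/2), (n : ℝ))}

/-!
Write `y = (s, v)`. Translating by a lattice vector we may assume `0 ≤ v < 1`; then it suffices
to look at the lattice rows of heights `2, 0, 1, -1`, and along the row of height `n` the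
translates `D'₈(α) + (2m + n(1 + α/2), n)` containing `y` are those with `m` in an explicit
interval, because `D'₈(α)` is the intersection of the four slabs between its pairs of parallel
edges. After shifting `m` by `2` on the rows of odd height these four intervals abut and fill an
interval `[c, c + 5]`. Closed intervals chained end to end over `[c, c + 5]` contain at least `5`
integers counted with multiplicity, and the open ones (for interior points) at most `5`.
-/

open Finset

section IntegersInIntervals

variable {K : Type*} [Ring K] [LinearOrder K] [FloorRing K]

lemma card_Icc_ceil_floor_le_add (a b c : K) :
    #(Icc ⌈a⌉ ⌊c⌋) ≤ #(Icc ⌈a⌉ ⌊b⌋) + #(Icc ⌈b⌉ ⌊c⌋) := by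
  refine (card_le_card fun k hk => ?_).trans (card_union_le _ _)
  simp only [mem_union, mem_Icc, Int.ceil_le, Int.le_floor] at hk ⊢
  rcases le_total (k : K) b with h | h
  · exact .inl ⟨hk.1, h⟩
  · exact .inr ⟨h, hk.2⟩

lemma card_Ioo_floor_ceil_add_card_le {a b c : K} (hab : a ≤ b) (hbc : b ≤ c) :
    #(Ioo ⌊a⌋ ⌈b⌉) + #(Ioo ⌊b⌋ ⌈c⌉) ≤ #(Ioo ⌊a⌋ ⌈c⌉) := by
  rw [← card_union_of_disjoint]
  · refine card_le_card fun k hk => ?_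
    simp only [mem_union, mem_Ioo, Int.floor_lt, Int.lt_ceil] at hk ⊢
    rcases hk with h | h
    · exact ⟨h.1, h.2.trans_le hbc⟩
    · exact ⟨hab.trans_lt h.1, h.2⟩
  · refine disjoint_left.2 fun k hk hk' => ?_
    simp only [mem_Ioo, Int.floor_lt, Int.lt_ceil] at hk hk'
    exact lt_asymm hk.2 hk'.1

lemma card_Icc_ceil_floor_le_sum : ∀ {n : ℕ} (c : Fin (n + 2) → K),
    #(Icc ⌈c 0⌉ ⌊c (Fin.last (n + 1))⌋) ≤ ∑ j : Fin (n + 1), #(Icc ⌈c j.castSucc⌉ ⌊c j.succ⌋)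
  | 0, c => by simp
  | n + 1, c => by
    have ih := card_Icc_ceil_floor_le_sum (c ∘ Fin.castSucc)
    simp only [Function.comp_apply, Fin.castSucc_zero] at ih
    rw [Fin.sum_univ_castSucc, ← Fin.succ_last]
    simp only [Fin.succ_castSucc]
    exact (card_Icc_ceil_floor_le_add _ (c (Fin.last (n + 1)).castSucc) _).trans
      (Nat.add_le_add_right ih _)

lemma sum_card_Ioo_floor_ceil_le : ∀ {n : ℕ} (c : Fin (n + 1) → K), Monotone c →
    ∑ j : Fin n, #(Ioo ⌊c j.castSucc⌋ ⌈c j.succ⌉) ≤ #(Ioo ⌊c 0⌋ ⌈c (Fin.last n)⌉)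
  | 0, c, _ => by simp
  | n + 1, c, hc => by
    have ih := sum_card_Ioo_floor_ceil_le (c ∘ Fin.castSucc)
      (hc.comp Fin.strictMono_castSucc.monotone)
    simp only [Function.comp_apply, Fin.castSucc_zero] at ih
    rw [Fin.sum_univ_castSucc]
    simp only [Fin.succ_castSucc]
    refine (Nat.add_le_add_right ih _).trans ?_
    rw [Fin.succ_last]
    exact card_Ioo_floor_ceil_add_card_le (hc (Fin.zero_le _)) (hc (Fin.castSucc_le_succ _))

lemma le_card_Icc_ceil_floor_add_nat [IsOrderedRing K] (a : K) (n : ℕ) :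
    n ≤ #(Icc ⌈a⌉ ⌊a + n⌋) := by
  rw [Int.card_Icc, Int.floor_add_natCast]
  have := Int.ceil_le_floor_add_one a
  omega

lemma card_Ioo_floor_ceil_add_nat_le [IsOrderedRing K] (a : K) (n : ℕ) :
    #(Ioo ⌊a⌋ ⌈a + n⌉) ≤ n := by
  rw [Int.card_Ioo, Int.ceil_add_natCast]
  have := Int.ceil_le_floor_add_one a
  omega

end IntegersInIntervals

def slab (u w c : ℝ) : Set (ℝ × ℝ) := {q | |u * q.1 + w * q.2| ≤ c}

lemma slab_eq_preimage (u w c : ℝ) :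
    slab u w c = (u • ContinuousLinearMap.fst ℝ ℝ ℝ + w • ContinuousLinearMap.snd ℝ ℝ ℝ) ⁻¹'
      Set.Icc (-c) c := by
  ext; simp [slab, abs_le]

lemma convex_slab (u w c : ℝ) : Convex ℝ (slab u w c) := by
  rw [slab_eq_preimage]
  exact (convex_Icc _ _).linear_preimage (ContinuousLinearMap.toLinearMap _)

lemma interior_slab {u w : ℝ} (h : (u, w) ≠ 0) (c : ℝ) :
    interior (slab u w c) = {q | |u * q.1 + w * q.2| < c} := by
  set f := u • ContinuousLinearMap.fst ℝ ℝ ℝ + w • ContinuousLinearMap.snd ℝ ℝ ℝ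
  have hf : f ≠ 0 := fun hf => h <| by
    simpa [f] using congr(($hf (1, 0), $hf (0, 1)))
  rw [slab_eq_preimage, ← (f.isOpenMap_of_ne_zero hf).preimage_interior_eq_interior_preimage
    f.continuous, interior_Icc]
  ext; simp [f, abs_lt]

lemma Convex.mk_mem_of_le_of_le {K : Set (ℝ × ℝ)} (hK : Convex ℝ K) {a b p t : ℝ}
    (ha : (a, t) ∈ K) (hb : (b, t) ∈ K) (hap : a ≤ p) (hpb : p ≤ b) : (p, t) ∈ K :=
  hK.segment_subset ha hb <| by
    rw [← Prod.image_mk_segment_left, segment_eq_Icc (hap.trans hpb)]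
    exact ⟨p, ⟨hap, hpb⟩, rfl⟩

def octagonSlabs (α : ℝ) : Set (ℝ × ℝ) :=
  slab 0 1 2 ∩ slab 1 0 (3/2 - α/4) ∩ slab 1 (1/2 - 3*α/4) (3/2 - α/4) ∩
    slab 1 (-α) (3/2 + 3*α/4)

section

variable {α : ℝ}

lemma D₈'α_subset_octagonSlabs (h0 : 0 ≤ α) (h1 : α ≤ 2/3) : D₈'α α ⊆ octagonSlabs α := by
  refine convexHull_min ?_ ((((convex_slab _ _ _).inter (convex_slab _ _ _)).inter
    (convex_slab _ _ _)).inter (convex_slab _ _ _))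
  simp only [Set.insert_subset_iff, Set.singleton_subset_iff, octagonSlabs, slab,
    Set.mem_inter_iff, Set.mem_ofPred_eq, abs_le]
  refine ⟨?_, ?_, ?_, ?_, ?_, ?_, ?_, ?_⟩ <;>
    refine ⟨⟨⟨⟨?_, ?_⟩, ?_, ?_⟩, ?_, ?_⟩, ?_, ?_⟩ <;> linarith

lemma octagonSlabs_subset_D₈'α : octagonSlabs α ⊆ D₈'α α := by
  rintro ⟨p, t⟩ hq
  simp only [octagonSlabs, slab, Set.mem_inter_iff, Set.mem_ofPred_eq, abs_le] at hq
  have hD : Convex ℝ (D₈'α α) := convex_convexHull ℝ _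
  have edge : ∀ {a b c d θ x : ℝ}, (a, b) ∈ D₈'α α → (c, d) ∈ D₈'α α → 0 ≤ θ → θ ≤ 1 →
      (1 - θ) * a + θ * c = x → (1 - θ) * b + θ * d = t → (x, t) ∈ D₈'α α := by
    rintro a b c d θ x hP hQ h0 h1 rfl rfl
    simpa [AffineMap.lineMap_apply_module] using hD.lineMap_mem hP hQ ⟨h0, h1⟩
  have v₁ : (3/2 - 5*α/4, -2) ∈ D₈'α α := subset_convexHull ℝ _ (by simp)
  have v₂ : (-1/2 - 5*α/4, -2) ∈ D₈'α α := subset_convexHull ℝ _ (by simp)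
  have v₃ : (α/4 - 3/2, 0) ∈ D₈'α α := subset_convexHull ℝ _ (by simp)
  have v₄ : (α/4 - 3/2, 1) ∈ D₈'α α := subset_convexHull ℝ _ (by simp)
  have v₅ : (5*α/4 - 3/2, 2) ∈ D₈'α α := subset_convexHull ℝ _ (by simp)
  have v₆ : (1/2 + 5*α/4, 2) ∈ D₈'α α := subset_convexHull ℝ _ (by simp)
  have v₇ : (3/2 - α/4, 0) ∈ D₈'α α := subset_convexHull ℝ _ (by simp)
  have v₈ : (3/2 - α/4, -1) ∈ D₈'α α := subset_convexHull ℝ _ (by simp)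
  obtain ⟨l, hl, hlp⟩ : ∃ l, (l, t) ∈ D₈'α α ∧ l ≤ p := by
    rcases le_total t 0 with ht₀ | ht₀
    · exact ⟨_, edge v₃ v₂ (θ := -t/2) (by linarith) (by linarith) rfl (by ring), by linarith⟩
    rcases le_total t 1 with ht₁ | ht₁
    · exact ⟨_, edge v₃ v₄ (θ := t) (by linarith) (by linarith) rfl (by ring), by linarith⟩
    · exact ⟨_, edge v₄ v₅ (θ := t - 1) (by linarith) (by linarith) rfl (by ring), by linarith⟩
  obtain ⟨r, hr, hpr⟩ : ∃ r, (r, t) ∈ D₈'α α ∧ p ≤ r := by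
    rcases le_total 0 t with ht₀ | ht₀
    · exact ⟨_, edge v₇ v₆ (θ := t/2) (by linarith) (by linarith) rfl (by ring), by linarith⟩
    rcases le_total (-1) t with ht₁ | ht₁
    · exact ⟨_, edge v₇ v₈ (θ := -t) (by linarith) (by linarith) rfl (by ring), by linarith⟩
    · exact ⟨_, edge v₈ v₁ (θ := -t - 1) (by linarith) (by linarith) rfl (by ring), by linarith⟩
  exact hD.mk_mem_of_le_of_le hl hr hlp hpr

lemma D₈'α_eq_octagonSlabs (h0 : 0 ≤ α) (h1 : α ≤ 2/3) : D₈'α α = octagonSlabs α :=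
  (D₈'α_subset_octagonSlabs h0 h1).antisymm octagonSlabs_subset_D₈'α

-- The rows in the order in which their intervals abut, once `rowShift` re-indexes them.
def rowHeight : Fin 4 → ℤ := ![2, 0, 1, -1]

def rowShift : Fin 4 → ℤ := ![0, 0, 2, 2]

noncomputable def rowPoint (α : ℝ) (j : Fin 4) (k : ℤ) : ℝ × ℝ :=
  (2 * (k - rowShift j : ℤ) + rowHeight j * (1 + α/2), rowHeight j)

noncomputable def rowBreak (α : ℝ) (y : ℝ × ℝ) : Fin 5 → ℝ :=
  ![(y.1 - 7/2 + α/4 - α * y.2) / 2, (y.1 - 3/2 + α/4 + (1/2 - 3*α/4) * y.2) / 2,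
    (y.1 + 3/2 - α/4) / 2, (y.1 + (1/2 - 3*α/4) * y.2) / 2 + 2,
    (y.1 - 7/2 + α/4 - α * y.2) / 2 + 5]

lemma rowPoint_mem_Λα (j : Fin 4) (k : ℤ) : rowPoint α j k ∈ Λα α :=
  ⟨k - rowShift j, rowHeight j, by simp [rowPoint]⟩

lemma rowPoint_injective (α : ℝ) :
    Function.Injective fun i : Σ _ : Fin 4, ℤ => rowPoint α i.1 i.2 := by
  rintro ⟨j, k⟩ ⟨j', k'⟩ h
  simp only [rowPoint, Prod.mk.injEq, Int.cast_inj] at h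
  obtain rfl : j = j' := (by decide : Function.Injective rowHeight) h.2
  obtain rfl : k = k' := by simpa using h.1
  rfl

lemma rowBreak_monotone {y : ℝ × ℝ} (h0 : 0 ≤ α) (h1 : α ≤ 2/3) (hv₀ : 0 ≤ y.2)
    (hv₁ : y.2 ≤ 1) :
    Monotone (rowBreak α y) := by
  have : α * y.2 ≤ α := mul_le_of_le_one_right h0 hv₁
  have : 0 ≤ α * y.2 := mul_nonneg h0 hv₀
  refine Fin.monotone_iff_le_succ.2 fun i => ?_
  fin_cases i <;> simp [rowBreak] <;> linarith

lemma sub_rowPoint_mem_octagonSlabs {y : ℝ × ℝ} (h0 : 0 ≤ α) (h1 : α ≤ 2/3) (hv₀ : 0 ≤ y.2)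
    (hv₁ : y.2 ≤ 1) {j : Fin 4} {k : ℤ} (hk₀ : rowBreak α y j.castSucc ≤ k)
    (hk₁ : k ≤ rowBreak α y j.succ) : y - rowPoint α j k ∈ octagonSlabs α := by
  have hβ : 0 ≤ 1/2 - 3*α/4 := by linarith
  have := mul_nonneg h0 hv₀
  have := mul_nonneg h0 (sub_nonneg.2 hv₁)
  have := mul_nonneg hβ hv₀
  have := mul_nonneg hβ (sub_nonneg.2 hv₁)
  simp only [octagonSlabs, slab, Set.mem_inter_iff, Set.mem_ofPred_eq, abs_le]
  fin_cases j <;> simp [rowBreak, rowPoint, rowHeight, rowShift] at hk₀ hk₁ ⊢ <;>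
    refine ⟨⟨⟨⟨?_, ?_⟩, ?_, ?_⟩, ?_, ?_⟩, ?_, ?_⟩ <;> linarith

lemma exists_rowPoint_of_sub_mem_interior {y x : ℝ × ℝ} (hv₀ : 0 ≤ y.2) (hv₁ : y.2 < 1)
    (hx : x ∈ Λα α) (h : y - x ∈ interior (octagonSlabs α)) :
    ∃ j k, x = rowPoint α j k ∧ rowBreak α y j.castSucc < k ∧ k < rowBreak α y j.succ := by
  obtain ⟨m, n, rfl⟩ := hx
  simp only [octagonSlabs, interior_inter, interior_slab (by simp : ((0 : ℝ), (1 : ℝ)) ≠ 0),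
    interior_slab (by simp : ((1 : ℝ), _) ≠ 0), Set.mem_inter_iff, Set.mem_ofPred_eq, abs_lt,
    Prod.fst_sub, Prod.snd_sub] at h
  obtain ⟨⟨⟨⟨ht₀, ht₁⟩, hp₀, hp₁⟩, hβ₀, hβ₁⟩, hα₀, hα₁⟩ := h
  have hn₀ : -2 < n := by exact_mod_cast (by linarith : (-2 : ℝ) < n)
  have hn₁ : n < 3 := by exact_mod_cast (by linarith : (n : ℝ) < 3)
  interval_cases n
  · exact ⟨3, m + 2, by simp [rowPoint, rowHeight, rowShift], by simp [rowBreak]; linarith,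
      by simp [rowBreak]; linarith⟩
  · exact ⟨1, m, by simp [rowPoint, rowHeight, rowShift], by simp [rowBreak]; linarith,
      by simp [rowBreak]; linarith⟩
  · exact ⟨2, m + 2, by simp [rowPoint, rowHeight, rowShift], by simp [rowBreak]; linarith,
      by simp [rowBreak]; linarith⟩
  · exact ⟨0, m, by simp [rowPoint, rowHeight, rowShift], by simp [rowBreak]; linarith,
      by simp [rowBreak]; linarith⟩

lemma exists_five_covering_translates {y : ℝ × ℝ} (h0 : 0 ≤ α) (h1 : α ≤ 2/3) (hv₀ : 0 ≤ y.2)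
    (hv₁ : y.2 ≤ 1) : ∃ S : Finset (ℝ × ℝ), ↑S ⊆ {x ∈ Λα α | y - x ∈ D₈'α α} ∧ 5 ≤ #S := by
  set c := rowBreak α y
  refine ⟨(univ.sigma fun j : Fin 4 => Icc ⌈c j.castSucc⌉ ⌊c j.succ⌋).map
    ⟨_, rowPoint_injective α⟩, fun x hx => ?_, ?_⟩
  · simp only [coe_map, Set.mem_image, mem_coe, mem_sigma, mem_univ, true_and, mem_Icc,
      Int.ceil_le, Int.le_floor] at hx
    obtain ⟨⟨j, k⟩, ⟨hk₀, hk₁⟩, rfl⟩ := hx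
    refine ⟨rowPoint_mem_Λα j k, ?_⟩
    rw [D₈'α_eq_octagonSlabs h0 h1]
    exact sub_rowPoint_mem_octagonSlabs h0 h1 hv₀ hv₁ hk₀ hk₁
  · rw [card_map, card_sigma]
    calc 5 ≤ #(Icc ⌈c 0⌉ ⌊c 0 + (5 : ℕ)⌋) := le_card_Icc_ceil_floor_add_nat _ 5
      _ = #(Icc ⌈c 0⌉ ⌊c (Fin.last 4)⌋) := by simp [c, rowBreak]
      _ ≤ _ := card_Icc_ceil_floor_le_sum c

lemma card_le_five_of_interior_covering {y : ℝ × ℝ} (h0 : 0 ≤ α) (h1 : α ≤ 2/3)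
    (hv₀ : 0 ≤ y.2) (hv₁ : y.2 < 1) {S : Finset (ℝ × ℝ)}
    (hS : ↑S ⊆ {x ∈ Λα α | y - x ∈ interior (D₈'α α)}) : #S ≤ 5 := by
  set c := rowBreak α y
  have hsub : S ⊆ (univ.sigma fun j : Fin 4 => Ioo ⌊c j.castSucc⌋ ⌈c j.succ⌉).image
      fun i => rowPoint α i.1 i.2 := by
    intro x hx
    obtain ⟨hxΛ, hxD⟩ := hS hx
    rw [D₈'α_eq_octagonSlabs h0 h1] at hxD
    obtain ⟨j, k, rfl, hk₀, hk₁⟩ := exists_rowPoint_of_sub_mem_interior hv₀ hv₁ hxΛ hxD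
    exact mem_image.2 ⟨⟨j, k⟩, by simpa [Int.floor_lt, Int.lt_ceil] using ⟨hk₀, hk₁⟩, rfl⟩
  calc #S ≤ _ := card_le_card hsub
    _ ≤ _ := card_image_le
    _ = ∑ j : Fin 4, #(Ioo ⌊c j.castSucc⌋ ⌈c j.succ⌉) := card_sigma _ _
    _ ≤ #(Ioo ⌊c 0⌋ ⌈c (Fin.last 4)⌉) :=
      sum_card_Ioo_floor_ceil_le c (rowBreak_monotone h0 h1 hv₀ hv₁.le)
    _ = #(Ioo ⌊c 0⌋ ⌈c 0 + (5 : ℕ)⌉) := by simp [c, rowBreak]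
    _ ≤ 5 := card_Ioo_floor_ceil_add_nat_le _ 5

end

lemma IsKFoldTiling.of_addSubgroup {K : Set (ℝ × ℝ)} {k : ℕ} (G : AddSubgroup (ℝ × ℝ))
    (F : Set (ℝ × ℝ)) (hF : ∀ y, ∃ g ∈ G, y - g ∈ F)
    (hcover : ∀ y ∈ F, ∃ S : Finset (ℝ × ℝ), ↑S ⊆ {x ∈ G | y - x ∈ K} ∧ k ≤ #S)
    (hpack : ∀ y ∈ F, ∀ S : Finset (ℝ × ℝ), ↑S ⊆ {x ∈ G | y - x ∈ interior K} → #S ≤ k) :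
    IsKFoldTiling K G k := by
  refine ⟨fun y => ?_, fun y S hS => ?_⟩
  · obtain ⟨g, hg, hyF⟩ := hF y
    obtain ⟨S, hS, hk⟩ := hcover _ hyF
    refine ⟨S.map (addRightEmbedding g), fun _ hx => ?_, by rwa [card_map]⟩
    rw [coe_map, Set.mem_image] at hx
    obtain ⟨x, hx, rfl⟩ := hx
    obtain ⟨hxG, hxK⟩ := hS hx
    exact ⟨G.add_mem hxG hg, by rwa [addRightEmbedding_apply, sub_add_eq_sub_sub_swap]⟩
  · obtain ⟨g, hg, hyF⟩ := hF y
    rw [← card_map (addRightEmbedding (-g))]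
    refine hpack _ hyF _ fun _ hx => ?_
    rw [coe_map, Set.mem_image] at hx
    obtain ⟨x, hx, rfl⟩ := hx
    obtain ⟨hxG, hxK⟩ := hS hx
    exact ⟨G.add_mem hxG (G.neg_mem hg), by simpa [sub_add_eq_sub_sub_swap] using hxK⟩

def Λα.addSubgroup (α : ℝ) : AddSubgroup (ℝ × ℝ) where
  carrier := Λα α
  zero_mem' := ⟨0, 0, by ext <;> simp⟩
  add_mem' := by
    rintro _ _ ⟨m, n, rfl⟩ ⟨m', n', rfl⟩
    exact ⟨m + m', n + n', by simp only [Prod.mk_add_mk]; push_cast; ring_nf⟩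
  neg_mem' := by
    rintro _ ⟨m, n, rfl⟩
    exact ⟨-m, -n, by simp only [Prod.neg_mk]; push_cast; ring_nf⟩

/-- For `0 < α < 2/3`, `D'₈(α) + Λ(α)` is a five-fold tiling of the plane. -/
theorem D₈'α_fivefold_tiling (α : ℝ) (h0 : 0 < α) (h1 : α < 2/3) :
    IsKFoldTiling (D₈'α α) (Λα α) 5 :=
  IsKFoldTiling.of_addSubgroup (Λα.addSubgroup α) {y | 0 ≤ y.2 ∧ y.2 < 1}
    (fun y => ⟨(⌊y.2⌋ * (1 + α/2), ⌊y.2⌋), ⟨0, ⌊y.2⌋, by simp⟩,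
      Int.fract_nonneg y.2, Int.fract_lt_one y.2⟩)
    (fun _ hy => exists_five_covering_translates h0.le h1.le hy.1 hy.2.le)
    (fun _ hy _ => card_le_five_of_interior_covering h0.le h1.le hy.1 hy.2)
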